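/- arXiv:1407.6449 — 3 statements merged into one kernel-verified Lean document; each statement's English description precedes it below -/
import Mathlib

section
/- Let û : ℝ≥0 → ℂ⁶ solve the Fourier-transformed 6×6 Timoshenko–Cattaneo system (∂ₜû₁ + iξû₂ + û₄ = 0, ∂ₜû₂ + iξû₁ = 0, ∂ₜû₃ + iξa₄û₄ = 0, ∂ₜû₄ + iξ(a₄û₃ + a₅û₅) − û₁ = 0, ∂ₜû₅ + iξ(a₅û₄ + a₆û₆) = 0, ∂ₜû₆ + iξa₆û₅ + γû₆ = 0). Then the identity −∂ₜ Re(û₁·conj(û₄) + a₄·û₂·conj(û₃)) + |û₁|² − |û₄|² + (a₄² − 1)·ξ·Re(i·û₂·conj(û₄)) + a₅·ξ·Re(i·û₁·conj(û₅)) = 0 holds for all t ≥ 0. -/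
open Complex

/-- Dissipation identity (2.4)+(combination) for the Fourier-transformed 6×6
Timoshenko–Cattaneo system. -/
theorem stmt1 (γ ξ a₄ a₅ a₆ : ℝ) (hγ : 0 < γ)
    (ha₄ : a₄ ≠ 0) (ha₅ : a₅ ≠ 0) (ha₆ : a₆ ≠ 0)
    (u : ℝ → Fin 6 → ℂ)
    (hdiff : ∀ j : Fin 6, ∀ t : ℝ, 0 ≤ t → DifferentiableAt ℝ (fun s => u s j) t)
    (h1 : ∀ t : ℝ, 0 ≤ t →
      deriv (fun s => u s 0) t + I * (ξ : ℂ) * u t 1 + u t 3 = 0)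
    (h2 : ∀ t : ℝ, 0 ≤ t →
      deriv (fun s => u s 1) t + I * (ξ : ℂ) * u t 0 = 0)
    (h3 : ∀ t : ℝ, 0 ≤ t →
      deriv (fun s => u s 2) t + I * (ξ : ℂ) * (a₄ : ℂ) * u t 3 = 0)
    (h4 : ∀ t : ℝ, 0 ≤ t →
      deriv (fun s => u s 3) t + I * (ξ : ℂ) * ((a₄ : ℂ) * u t 2 + (a₅ : ℂ) * u t 4)
        - u t 0 = 0)
    (h5 : ∀ t : ℝ, 0 ≤ t →
      deriv (fun s => u s 4) t + I * (ξ : ℂ) * ((a₅ : ℂ) * u t 3 + (a₆ : ℂ) * u t 5) = 0)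
    (h6 : ∀ t : ℝ, 0 ≤ t →
      deriv (fun s => u s 5) t + I * (ξ : ℂ) * (a₆ : ℂ) * u t 4 + (γ : ℂ) * u t 5 = 0) :
    ∀ t : ℝ, 0 ≤ t →
      - deriv (fun s => (u s 0 * (starRingEnd ℂ) (u s 3)
          + (a₄ : ℂ) * u s 1 * (starRingEnd ℂ) (u s 2)).re) t
      + Complex.normSq (u t 0) - Complex.normSq (u t 3)
      + (a₄^2 - 1) * ξ * (I * u t 1 * (starRingEnd ℂ) (u t 3)).re
      + a₅ * ξ * (I * u t 0 * (starRingEnd ℂ) (u t 4)).re = 0 := by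
  intro t ht
  have hd : ∀ j : Fin 6, HasDerivAt (fun s => u s j) (deriv (fun s => u s j) t) t :=
    fun j => (hdiff j t ht).hasDerivAt
  set d0 := deriv (fun s => u s 0) t with hd0
  set d1 := deriv (fun s => u s 1) t with hd1
  set d2 := deriv (fun s => u s 2) t with hd2
  set d3 := deriv (fun s => u s 3) t with hd3
  have key : HasDerivAt (fun s => (u s 0 * (starRingEnd ℂ) (u s 3)
      + (a₄ : ℂ) * u s 1 * (starRingEnd ℂ) (u s 2)).re)
      ((d0 * (starRingEnd ℂ) (u t 3) + u t 0 * (starRingEnd ℂ) d3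
        + ((a₄ : ℂ) * d1 * (starRingEnd ℂ) (u t 2)
          + (a₄ : ℂ) * u t 1 * (starRingEnd ℂ) d2)).re) t := by
    have h03 : HasDerivAt (fun s => u s 0 * (starRingEnd ℂ) (u s 3))
        (d0 * (starRingEnd ℂ) (u t 3) + u t 0 * (starRingEnd ℂ) d3) t :=
      (hd 0).mul ((hd 3).star)
    have h12 : HasDerivAt (fun s => (a₄ : ℂ) * u s 1 * (starRingEnd ℂ) (u s 2))
        ((a₄ : ℂ) * d1 * (starRingEnd ℂ) (u t 2) + (a₄ : ℂ) * u t 1 * (starRingEnd ℂ) d2) t :=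
      (((hd 1).const_mul (a₄ : ℂ)).mul ((hd 2).star))
    exact Complex.reCLM.hasFDerivAt.comp_hasDerivAt t (h03.add h12)
  rw [key.deriv]
  have e1 : d0 = -(I * (ξ : ℂ) * u t 1 + u t 3) := by
    have := h1 t ht; rw [← hd0] at this; linear_combination this
  have e2 : d1 = -(I * (ξ : ℂ) * u t 0) := by
    have := h2 t ht; rw [← hd1] at this; linear_combination this
  have e3 : d2 = -(I * (ξ : ℂ) * (a₄ : ℂ) * u t 3) := by
    have := h3 t ht; rw [← hd2] at this; linear_combination this
  have e4 : d3 = u t 0 - I * (ξ : ℂ) * ((a₄ : ℂ) * u t 2 + (a₅ : ℂ) * u t 4) := by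
    have := h4 t ht; rw [← hd3] at this; linear_combination this
  rw [e1, e2, e3, e4]
  simp only [map_sub, map_add, map_mul, map_neg, Complex.conj_I, Complex.conj_ofReal,
    Complex.normSq_apply, Complex.add_re, Complex.sub_re, Complex.neg_re, Complex.mul_re,
    Complex.mul_im, Complex.add_im, Complex.sub_im, Complex.neg_im, Complex.I_re, Complex.I_im,
    Complex.ofReal_re, Complex.ofReal_im, Complex.conj_re, Complex.conj_im]
  ring
end

section
/- Let û : ℝ≥0 → ℂ⁶ solve the Fourier-transformed 6×6 Timoshenko–Cattaneo system as above. Define E₁ = −Re( a₅²(û₁·conj(û₄) + a₄·û₂·conj(û₃)) − a₅(a₄² − 1)·û₂·conj(û₅) ). Then ∂ₜE₁ + a₅²(|û₁|² − |û₄|²) + a₅(a₄² + a₅² − 1)·ξ·Re(i·û₁·conj(û₅)) − a₅·a₆·(a₄² − 1)·ξ·Re(i·û₂·conj(û₆)) = 0 for all t ≥ 0. -/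
/-!
Differentiate the three products in E₁ by the product rule and substitute the equations for
û₁, …, û₅ (û_k is `u · (k - 1)`). The first two products produce, besides
a₅²(|û₁|² − |û₄|²), the cross term a₅²(a₄² − 1) ξ Re(i û₂ conj û₄); the coefficient
a₅(a₄² − 1) of û₂ conj û₅ in E₁ is exactly the one for which the third product cancels it.
-/

open Complex ComplexConjugate

theorem HasDerivAt.complex_re {f : ℝ → ℂ} {f' : ℂ} {t : ℝ} (hf : HasDerivAt f f' t) :
    HasDerivAt (fun s => (f s).re) f'.re t :=
  reCLM.hasFDerivAt.comp_hasDerivAt t hf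

theorem HasDerivAt.mul_conj {f g : ℝ → ℂ} {f' g' : ℂ} {t : ℝ} (hf : HasDerivAt f f' t)
    (hg : HasDerivAt g g' t) :
    HasDerivAt (fun s => f s * conj (g s)) (f' * conj (g t) + f t * conj g') t :=
  hf.mul hg.star

theorem stmt2_general (ξ a₄ a₅ a₆ : ℝ)
    (u : ℝ → Fin 6 → ℂ)
    (hdiff : ∀ j : Fin 6, ∀ t : ℝ, 0 ≤ t → DifferentiableAt ℝ (fun s => u s j) t)
    (h1 : ∀ t : ℝ, 0 ≤ t →
      deriv (fun s => u s 0) t + I * (ξ : ℂ) * u t 1 + u t 3 = 0)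
    (h2 : ∀ t : ℝ, 0 ≤ t →
      deriv (fun s => u s 1) t + I * (ξ : ℂ) * u t 0 = 0)
    (h3 : ∀ t : ℝ, 0 ≤ t →
      deriv (fun s => u s 2) t + I * (ξ : ℂ) * (a₄ : ℂ) * u t 3 = 0)
    (h4 : ∀ t : ℝ, 0 ≤ t →
      deriv (fun s => u s 3) t + I * (ξ : ℂ) * ((a₄ : ℂ) * u t 2 + (a₅ : ℂ) * u t 4)
        - u t 0 = 0)
    (h5 : ∀ t : ℝ, 0 ≤ t →
      deriv (fun s => u s 4) t + I * (ξ : ℂ) * ((a₅ : ℂ) * u t 3 + (a₆ : ℂ) * u t 5) = 0) :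
    ∀ t : ℝ, 0 ≤ t →
      deriv (fun s => -(((a₅^2 : ℝ) : ℂ) * (u s 0 * (starRingEnd ℂ) (u s 3)
            + (a₄ : ℂ) * u s 1 * (starRingEnd ℂ) (u s 2))
          - ((a₅ * (a₄^2 - 1) : ℝ) : ℂ) * u s 1 * (starRingEnd ℂ) (u s 4)).re) t
      + a₅^2 * (Complex.normSq (u t 0) - Complex.normSq (u t 3))
      + a₅ * (a₄^2 + a₅^2 - 1) * ξ * (I * u t 0 * (starRingEnd ℂ) (u t 4)).re
      - a₅ * a₆ * (a₄^2 - 1) * ξ * (I * u t 1 * (starRingEnd ℂ) (u t 5)).re = 0 := by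
  intro t ht
  have hu (j : Fin 6) : HasDerivAt (fun s => u s j) (deriv (fun s => u s j) t) t :=
    (hdiff j t ht).hasDerivAt
  have hE :=
    ((((hu 0).mul_conj (hu 3)).fun_add (((hu 1).const_mul (a₄ : ℂ)).mul_conj (hu 2))).const_mul
      ((a₅ ^ 2 : ℝ) : ℂ) |>.fun_sub
        (((hu 1).const_mul ((a₅ * (a₄ ^ 2 - 1) : ℝ) : ℂ)).mul_conj (hu 4))).complex_re.fun_neg
  rw [hE.deriv,
    show deriv (fun s => u s 0) t = -(I * ξ * u t 1 + u t 3) by linear_combination h1 t ht,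
    show deriv (fun s => u s 1) t = -(I * ξ * u t 0) by linear_combination h2 t ht,
    show deriv (fun s => u s 2) t = -(I * ξ * a₄ * u t 3) by linear_combination h3 t ht,
    show deriv (fun s => u s 3) t = u t 0 - I * ξ * (a₄ * u t 2 + a₅ * u t 4) by
      linear_combination h4 t ht,
    show deriv (fun s => u s 4) t = -(I * ξ * (a₅ * u t 3 + a₆ * u t 5)) by
      linear_combination h5 t ht]
  simp only [map_add, map_mul, map_sub, map_neg, conj_ofReal, conj_I, normSq_apply, add_re,
    sub_re, neg_re, mul_re, mul_im, add_im, sub_im, neg_im, conj_re, conj_im, I_re, I_im,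
    ofReal_re, ofReal_im]
  ring

/-- Dissipation identity (2.8) for the Fourier-transformed 6×6 Timoshenko–Cattaneo
system, for the functional E₁. -/
theorem stmt2 (γ ξ a₄ a₅ a₆ : ℝ) (hγ : 0 < γ)
    (ha₄ : a₄ ≠ 0) (ha₅ : a₅ ≠ 0) (ha₆ : a₆ ≠ 0)
    (u : ℝ → Fin 6 → ℂ)
    (hdiff : ∀ j : Fin 6, ∀ t : ℝ, 0 ≤ t → DifferentiableAt ℝ (fun s => u s j) t)
    (h1 : ∀ t : ℝ, 0 ≤ t →
      deriv (fun s => u s 0) t + I * (ξ : ℂ) * u t 1 + u t 3 = 0)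
    (h2 : ∀ t : ℝ, 0 ≤ t →
      deriv (fun s => u s 1) t + I * (ξ : ℂ) * u t 0 = 0)
    (h3 : ∀ t : ℝ, 0 ≤ t →
      deriv (fun s => u s 2) t + I * (ξ : ℂ) * (a₄ : ℂ) * u t 3 = 0)
    (h4 : ∀ t : ℝ, 0 ≤ t →
      deriv (fun s => u s 3) t + I * (ξ : ℂ) * ((a₄ : ℂ) * u t 2 + (a₅ : ℂ) * u t 4)
        - u t 0 = 0)
    (h5 : ∀ t : ℝ, 0 ≤ t →
      deriv (fun s => u s 4) t + I * (ξ : ℂ) * ((a₅ : ℂ) * u t 3 + (a₆ : ℂ) * u t 5) = 0)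
    (h6 : ∀ t : ℝ, 0 ≤ t →
      deriv (fun s => u s 5) t + I * (ξ : ℂ) * (a₆ : ℂ) * u t 4 + (γ : ℂ) * u t 5 = 0) :
    ∀ t : ℝ, 0 ≤ t →
      deriv (fun s => -(((a₅^2 : ℝ) : ℂ) * (u s 0 * (starRingEnd ℂ) (u s 3)
            + (a₄ : ℂ) * u s 1 * (starRingEnd ℂ) (u s 2))
          - ((a₅ * (a₄^2 - 1) : ℝ) : ℂ) * u s 1 * (starRingEnd ℂ) (u s 4)).re) t
      + a₅^2 * (Complex.normSq (u t 0) - Complex.normSq (u t 3))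
      + a₅ * (a₄^2 + a₅^2 - 1) * ξ * (I * u t 0 * (starRingEnd ℂ) (u t 4)).re
      - a₅ * a₆ * (a₄^2 - 1) * ξ * (I * u t 1 * (starRingEnd ℂ) (u t 5)).re = 0 :=
  stmt2_general ξ a₄ a₅ a₆ u hdiff h1 h2 h3 h4 h5
end

section
/- Let û : ℝ≥0 → ℂ⁶ solve the Fourier-transformed 6×6 Timoshenko–Cattaneo system as above and define E₂ = −Re(i·û₁·conj(û₂)). Then ξ·∂ₜE₂ + ξ²(|û₂|² − |û₁|²) + ξ·Re(i·û₂·conj(û₄)) = 0, and consequently ξ·∂ₜE₂ + (1/2)ξ²|û₂|² ≤ ξ²|û₁|² + (1/2)|û₄|² for all t ≥ 0. -/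
/-!
Differentiating `E₂ = -Re(i û₁ conj û₂)` and substituting `∂ₜû₁ = -iξû₂ - û₄`, `∂ₜû₂ = -iξû₁`
gives the identity by direct computation. The estimate follows by bounding the coupling term
`-ξ Re(i û₂ conj û₄) = Re(z conj û₄)` with `z = -iξû₂` through `Re(z conj w) ≤ (|z|² + |w|²)/2`.
-/

open Complex ComplexConjugate

theorem hasDerivAt_re_mul_conj {f g : ℝ → ℂ} {f' g' : ℂ} {t : ℝ}
    (hf : HasDerivAt f f' t) (hg : HasDerivAt g g' t) :
    HasDerivAt (fun s => (f s * conj (g s)).re) (f' * conj (g t) + f t * conj g').re t :=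
  reCLM.hasFDerivAt.comp_hasDerivAt t (hf.mul hg.star)

theorem re_mul_conj_le_half_normSq_add (z w : ℂ) :
    (z * conj w).re ≤ (normSq z + normSq w) / 2 := by
  simp only [mul_re, conj_re, conj_im, normSq_apply]
  nlinarith [sq_nonneg (z.re - w.re), sq_nonneg (z.im - w.im)]

def E₂ (f g : ℝ → ℂ) (s : ℝ) : ℝ := -(I * f s * conj (g s)).re

theorem E₂_energy_identity {f g h : ℝ → ℂ} {ξ t : ℝ}
    (hf : HasDerivAt f (-(I * ξ * g t) - h t) t) (hg : HasDerivAt g (-(I * ξ * f t)) t) :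
    ξ * deriv (E₂ f g) t
      + ξ ^ 2 * (normSq (g t) - normSq (f t)) + ξ * (I * g t * conj (h t)).re = 0 := by
  have hE : HasDerivAt (E₂ f g)
      (-(I * (-(I * ξ * g t) - h t) * conj (g t) + I * f t * conj (-(I * ξ * f t))).re) t :=
    (hasDerivAt_re_mul_conj (hf.const_mul I) hg).neg
  rw [hE.deriv]
  simp only [normSq_apply, add_re, mul_re, mul_im, neg_re, neg_im, sub_re, sub_im,
    I_re, I_im, conj_re, conj_im, ofReal_re, ofReal_im]
  ring

theorem stmt3_general (ξ : ℝ)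
    (u : ℝ → Fin 6 → ℂ)
    (hdiff : ∀ j : Fin 6, ∀ t : ℝ, 0 ≤ t → DifferentiableAt ℝ (fun s => u s j) t)
    (h1 : ∀ t : ℝ, 0 ≤ t →
      deriv (fun s => u s 0) t + I * (ξ : ℂ) * u t 1 + u t 3 = 0)
    (h2 : ∀ t : ℝ, 0 ≤ t →
      deriv (fun s => u s 1) t + I * (ξ : ℂ) * u t 0 = 0) :
    ∀ t : ℝ, 0 ≤ t →
      (ξ * deriv (fun s => -(I * u s 0 * (starRingEnd ℂ) (u s 1)).re) t
        + ξ^2 * (Complex.normSq (u t 1) - Complex.normSq (u t 0))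
        + ξ * (I * u t 1 * (starRingEnd ℂ) (u t 3)).re = 0)
      ∧ (ξ * deriv (fun s => -(I * u s 0 * (starRingEnd ℂ) (u s 1)).re) t
          + (1/2) * ξ^2 * Complex.normSq (u t 1)
          ≤ ξ^2 * Complex.normSq (u t 0) + (1/2) * Complex.normSq (u t 3)) := by
  intro t ht
  have hE₂ : (fun s => -(I * u s 0 * conj (u s 1)).re) = E₂ (fun s => u s 0) (fun s => u s 1) :=
    rfl
  rw [hE₂]
  have hu₀ : HasDerivAt (fun s => u s 0) (-(I * ξ * u t 1) - u t 3) t := by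
    have hderiv : deriv (fun s => u s 0) t = -(I * ξ * u t 1) - u t 3 := by
      linear_combination h1 t ht
    rw [← hderiv]
    exact (hdiff 0 t ht).hasDerivAt
  have hu₁ : HasDerivAt (fun s => u s 1) (-(I * ξ * u t 0)) t := by
    have hderiv : deriv (fun s => u s 1) t = -(I * ξ * u t 0) := by
      linear_combination h2 t ht
    rw [← hderiv]
    exact (hdiff 1 t ht).hasDerivAt
  have identity :=
    E₂_energy_identity (f := fun s => u s 0) (g := fun s => u s 1) (h := fun s => u s 3) hu₀ hu₁
  refine ⟨identity, ?_⟩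
  have young := re_mul_conj_le_half_normSq_add (-(I * ξ * u t 1)) (u t 3)
  have hcoupling :
      (-(I * ξ * u t 1) * conj (u t 3)).re = -(ξ * (I * u t 1 * conj (u t 3)).re) := by
    simp only [neg_mul, neg_re, mul_re, mul_im, I_re, I_im, ofReal_re, ofReal_im]
    ring
  have hnorm : normSq (-(I * ξ * u t 1)) = ξ ^ 2 * normSq (u t 1) := by
    simp only [normSq_neg, normSq_mul, normSq_I, normSq_ofReal]
    ring
  linarith

/-- Dissipation identity and Young-inequality estimate for E₂ = −Re(i·u₁·conj u₂) in the
Fourier-transformed 6×6 Timoshenko–Cattaneo system. -/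
theorem stmt3 (γ ξ a₄ a₅ a₆ : ℝ) (hγ : 0 < γ)
    (ha₄ : a₄ ≠ 0) (ha₅ : a₅ ≠ 0) (ha₆ : a₆ ≠ 0)
    (u : ℝ → Fin 6 → ℂ)
    (hdiff : ∀ j : Fin 6, ∀ t : ℝ, 0 ≤ t → DifferentiableAt ℝ (fun s => u s j) t)
    (h1 : ∀ t : ℝ, 0 ≤ t →
      deriv (fun s => u s 0) t + I * (ξ : ℂ) * u t 1 + u t 3 = 0)
    (h2 : ∀ t : ℝ, 0 ≤ t →
      deriv (fun s => u s 1) t + I * (ξ : ℂ) * u t 0 = 0)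
    (h3 : ∀ t : ℝ, 0 ≤ t →
      deriv (fun s => u s 2) t + I * (ξ : ℂ) * (a₄ : ℂ) * u t 3 = 0)
    (h4 : ∀ t : ℝ, 0 ≤ t →
      deriv (fun s => u s 3) t + I * (ξ : ℂ) * ((a₄ : ℂ) * u t 2 + (a₅ : ℂ) * u t 4)
        - u t 0 = 0)
    (h5 : ∀ t : ℝ, 0 ≤ t →
      deriv (fun s => u s 4) t + I * (ξ : ℂ) * ((a₅ : ℂ) * u t 3 + (a₆ : ℂ) * u t 5) = 0)
    (h6 : ∀ t : ℝ, 0 ≤ t →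
      deriv (fun s => u s 5) t + I * (ξ : ℂ) * (a₆ : ℂ) * u t 4 + (γ : ℂ) * u t 5 = 0) :
    ∀ t : ℝ, 0 ≤ t →
      (ξ * deriv (fun s => -(I * u s 0 * (starRingEnd ℂ) (u s 1)).re) t
        + ξ^2 * (Complex.normSq (u t 1) - Complex.normSq (u t 0))
        + ξ * (I * u t 1 * (starRingEnd ℂ) (u t 3)).re = 0)
      ∧ (ξ * deriv (fun s => -(I * u s 0 * (starRingEnd ℂ) (u s 1)).re) t
          + (1/2) * ξ^2 * Complex.normSq (u t 1)
          ≤ ξ^2 * Complex.normSq (u t 0) + (1/2) * Complex.normSq (u t 3)) :=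
  stmt3_general ξ u hdiff h1 h2
end
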